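/- Let 0 → F' → F → F'' → 0 be a short exact sequence of locally free sheaves of finite rank on a scheme (or, more simply, of finite-dimensional vector spaces/modules over a commutative ring). Then for every r ≥ 0, the r-th exterior power Λ^r F admits a finite decreasing filtration F = F^0 ⊇ F^1 ⊇ ⋯ ⊇ F^r ⊇ F^{r+1} = 0 whose successive quotients satisfy F^i/F^{i+1} ≅ Λ^i F' ⊗ Λ^{r−i} F''. -/

import Mathlib

/-!
Since `M''` is projective the sequence splits, so `M ≅ M' × M''` has a basis indexed by
`ι' ⊕ ι''`, and `⋀^r M` has the induced basis indexed by the `r`-subsets `s` of `ι' ⊕ ι''`.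
Weight each `s` by the number of its elements lying in `ι'`, and let `F i` be spanned by the
basis vectors of weight at least `i`. Then `F i / F (i + 1)` is free on the subsets of weight
exactly `i`, i.e. on pairs of an `i`-subset of `ι'` and an `(r - i)`-subset of `ι''`, which
index the basis of `⋀^i M' ⊗ ⋀^(r - i) M''`.
-/

open TensorProduct

namespace Module.Basis

variable {R N κ : Type*} [Semiring R] [AddCommMonoid N] [Module R N]
  (c : Basis κ R N) (w : κ → ℕ)

def weightFiltration (i : ℕ) : Submodule R N :=
  Submodule.span R (c '' {k | i ≤ w k})

variable {c w}

theorem mem_weightFiltration {i : ℕ} {x : N} :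
    x ∈ c.weightFiltration w i ↔ ∀ k, w k < i → c.repr x k = 0 := by
  rw [weightFiltration, mem_span_image]
  refine forall_congr' fun k => ?_
  rw [Finset.mem_coe, Finsupp.mem_support_iff, Set.mem_ofPred_eq, ← not_lt, not_imp_not]

variable (c w)

theorem weightFiltration_zero : c.weightFiltration w 0 = ⊤ :=
  eq_top_iff.mpr fun _ _ => mem_weightFiltration.mpr fun _ hk => absurd hk (Nat.not_lt_zero _)

theorem weightFiltration_antitone : Antitone (c.weightFiltration w) :=
  fun _ _ hij => Submodule.span_mono <| Set.image_mono fun _ hk => le_trans hij hk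

theorem weightFiltration_eq_bot {i : ℕ} (hw : ∀ k, w k < i) : c.weightFiltration w i = ⊥ := by
  refine eq_bot_iff.mpr fun x hx => (Submodule.mem_bot R).mpr ?_
  exact c.repr.injective <| by ext k; simpa using mem_weightFiltration.mp hx k (hw k)

noncomputable def weightGradedPiece (i : ℕ) :
    c.weightFiltration w i →ₗ[R] ({k // w k = i} →₀ R) :=
  Finsupp.lsubtypeDomain {k | w k = i} ∘ₗ c.repr.toLinearMap ∘ₗ (c.weightFiltration w i).subtype

theorem weightGradedPiece_surjective (i : ℕ) : Function.Surjective (c.weightGradedPiece w i) := by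
  classical
  intro v
  have hmem : c.repr.symm v.extendDomain ∈ c.weightFiltration w i := by
    rw [weightFiltration, mem_span_image, LinearEquiv.apply_symm_apply]
    exact (Finsupp.support_extendDomain_subset v).trans fun k hk => le_of_eq hk.symm
  refine ⟨⟨_, hmem⟩, ?_⟩
  simp only [weightGradedPiece, LinearMap.coe_comp, Function.comp_apply, Submodule.coe_subtype,
    LinearEquiv.coe_coe, LinearEquiv.apply_symm_apply]
  exact Finsupp.subtypeDomain_extendDomain v

theorem ker_weightGradedPiece (i : ℕ) :
    LinearMap.ker (c.weightGradedPiece w i) =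
      Submodule.comap (c.weightFiltration w i).subtype (c.weightFiltration w (i + 1)) := by
  ext ⟨x, hx⟩
  rw [LinearMap.mem_ker, Submodule.mem_comap, Submodule.subtype_apply, mem_weightFiltration]
  constructor
  · intro h k hk
    rcases Nat.lt_succ_iff_lt_or_eq.mp hk with hk | hk
    · exact mem_weightFiltration.mp hx k hk
    · exact DFunLike.congr_fun h ⟨k, hk⟩
  · intro h
    ext ⟨k, hk⟩
    exact h k (Nat.lt_succ_of_le hk.le)

end Module.Basis

namespace Set.powersetCard

def sumEquiv {α β : Type*} {r i : ℕ} (hi : i ≤ r) :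
    {s : powersetCard (α ⊕ β) r // (s : Finset (α ⊕ β)).toLeft.card = i} ≃
      powersetCard α i × powersetCard β (r - i) where
  toFun s := (ofCard s.2, ofCard (s := (s.1 : Finset (α ⊕ β)).toRight) (by
    have := Finset.card_toLeft_add_card_toRight (u := (s.1 : Finset (α ⊕ β)))
    rw [card_eq s.1, s.2] at this
    omega))
  invFun p := ⟨ofCard (s := (p.1 : Finset α).disjSum p.2) (by
    rw [Finset.card_disjSum, card_eq p.1, card_eq p.2]
    omega), by simp [ofCard, card_eq p.1]⟩
  left_inv s := Subtype.ext <| Subtype.ext (s.1 : Finset (α ⊕ β)).toLeft_disjSum_toRight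
  right_inv p := Prod.ext (Subtype.ext Finset.toLeft_disjSum) (Subtype.ext Finset.toRight_disjSum)

end Set.powersetCard

theorem exterior_power_filtration_of_short_exact_general
    (R : Type*) [CommRing R]
    (M' M M'' : Type*) [AddCommGroup M'] [AddCommGroup M] [AddCommGroup M'']
    [Module R M'] [Module R M] [Module R M'']
    [Module.Free R M']
    [Module.Free R M'']
    (f : M' →ₗ[R] M) (g : M →ₗ[R] M'')
    (hf : Function.Injective f) (hg : Function.Surjective g)
    (hfg : LinearMap.range f = LinearMap.ker g) (r : ℕ) :
    ∃ F : ℕ → Submodule R (⋀[R]^r M),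
      F 0 = ⊤ ∧
      F (r + 1) = ⊥ ∧
      (∀ i, F (i + 1) ≤ F i) ∧
      ∀ i ≤ r, ∃ q : (F i) →ₗ[R] ((⋀[R]^i M') ⊗[R] (⋀[R]^(r - i) M'')),
        Function.Surjective q ∧
        LinearMap.ker q = Submodule.comap (F i).subtype (F (i + 1)) := by
  obtain ⟨l, hl⟩ := Module.projective_lifting_property g LinearMap.id hg
  let e : M ≃ₗ[R] M' × M'' :=
    ((LinearMap.exact_iff.mpr hfg.symm).splitSurjectiveEquiv hf ⟨l, hl⟩).1
  let ι' := Module.Free.ChooseBasisIndex R M'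
  let ι'' := Module.Free.ChooseBasisIndex R M''
  let b' : Module.Basis ι' R M' := Module.Free.chooseBasis R M'
  let b'' : Module.Basis ι'' R M'' := Module.Free.chooseBasis R M''
  -- Any linear orders will do: they only fix the bases of the exterior powers.
  obtain ⟨_, -⟩ := exists_wellFoundedLT ι'
  obtain ⟨_, -⟩ := exists_wellFoundedLT ι''
  obtain ⟨_, -⟩ := exists_wellFoundedLT (ι' ⊕ ι'')
  let c := ((b'.prod b'').map e.symm).exteriorPower r
  let w (s : Set.powersetCard (ι' ⊕ ι'') r) : ℕ := (s : Finset (ι' ⊕ ι'')).toLeft.card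
  refine ⟨c.weightFiltration w, c.weightFiltration_zero w,
    c.weightFiltration_eq_bot w fun s =>
      Nat.lt_succ_of_le (Set.powersetCard.card_eq s ▸ Finset.card_toLeft_le),
    fun i => c.weightFiltration_antitone w i.le_succ, fun i hi => ?_⟩
  let iso := (Finsupp.domLCongr (Set.powersetCard.sumEquiv hi)).trans
    ((b'.exteriorPower i).tensorProduct (b''.exteriorPower (r - i))).repr.symm
  refine ⟨iso.toLinearMap ∘ₗ c.weightGradedPiece w i,
    iso.surjective.comp (c.weightGradedPiece_surjective w i), ?_⟩
  rw [LinearMap.ker_comp, LinearEquiv.ker, Submodule.comap_bot, c.ker_weightGradedPiece]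

/-- **Filtration of exterior powers of an extension** (Hartshorne, Ch. II, Ex. 5.16),
module version: given a short exact sequence `0 → M' → M → M'' → 0` of finite free
modules over a commutative ring `R`, the `r`-th exterior power `⋀^r M` admits a finite
decreasing filtration `⋀^r M = F 0 ⊇ F 1 ⊇ ⋯ ⊇ F r ⊇ F (r+1) = 0` whose successive
quotients satisfy `F i / F (i+1) ≅ ⋀^i M' ⊗ ⋀^(r-i) M''`.  (The quotient iso is
expressed by a surjective linear map `F i → ⋀^i M' ⊗ ⋀^(r-i) M''` with kernel
`F (i+1) ∩ F i = F (i+1)`.) -/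
theorem exterior_power_filtration_of_short_exact
    (R : Type*) [CommRing R]
    (M' M M'' : Type*) [AddCommGroup M'] [AddCommGroup M] [AddCommGroup M'']
    [Module R M'] [Module R M] [Module R M'']
    [Module.Free R M'] [Module.Finite R M']
    [Module.Free R M] [Module.Finite R M]
    [Module.Free R M''] [Module.Finite R M'']
    (f : M' →ₗ[R] M) (g : M →ₗ[R] M'')
    (hf : Function.Injective f) (hg : Function.Surjective g)
    (hfg : LinearMap.range f = LinearMap.ker g) (r : ℕ) :
    ∃ F : ℕ → Submodule R (⋀[R]^r M),
      F 0 = ⊤ ∧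
      F (r + 1) = ⊥ ∧
      (∀ i, F (i + 1) ≤ F i) ∧
      ∀ i ≤ r, ∃ q : (F i) →ₗ[R] ((⋀[R]^i M') ⊗[R] (⋀[R]^(r - i) M'')),
        Function.Surjective q ∧
        LinearMap.ker q = Submodule.comap (F i).subtype (F (i + 1)) :=
  exterior_power_filtration_of_short_exact_general R M' M M'' f g hf hg hfg r
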